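/- Let Π = (Δ, Σ, 𝒱, ℰ) be an LCL problem for Δ-regular unrooted trees. Then there exists a positive integer γ with the following property: for every subset 𝒮 ⊆ 𝒱 and every node configuration C ∈ 𝒮 \ trim(𝒮), there is no correct half-edge labeling of T_γ* in which the node configuration of the root is C and the node configuration of every other degree-Δ node lies in 𝒮. -/

import Mathlib

/-- `lclCompat 𝒮 ℰ i τ` : there is a correct half-edge labeling of a copy of the
rooted tree `T_i` hanging below an edge whose half-edge on the `T_i` side is
labeled `τ`, such that the node configuration of every degree-`Δ` node of this
subtree lies in `𝒮` and every edge configuration lies in `ℰ`. -/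
def lclCompat {L : Type} [DecidableEq L] (S E : Set (Multiset L)) : ℕ → L → Prop
  | 0, _ => True
  | i + 1, τ => ∃ C ∈ S, τ ∈ C ∧
      ∀ β ∈ C.erase τ, ∃ τ', ({β, τ'} : Multiset L) ∈ E ∧ lclCompat S E i τ'

/-- For `i ≥ 1`: there exists a correct half-edge labeling of `T_i*` in which the
node configuration of the root is `C` and the node configuration of every other
degree-`Δ` node lies in `𝒮` (edge configurations lie in `ℰ`). -/
def lclTreeOk {L : Type} [DecidableEq L] (S E : Set (Multiset L)) (i : ℕ)
    (C : Multiset L) : Prop :=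
  ∀ β ∈ C, ∃ τ, ({β, τ} : Multiset L) ∈ E ∧ lclCompat S E (i - 1) τ

/-- `trim 𝒮`: configurations `C ∈ 𝒮` such that for every `i ≥ 1` there is a correct
half-edge labeling of `T_i*` with root configuration `C` and all other degree-`Δ`
node configurations in `𝒮`. -/
def lclTrim {L : Type} [DecidableEq L] (S E : Set (Multiset L)) : Set (Multiset L) :=
  {C | C ∈ S ∧ ∀ i : ℕ, 1 ≤ i → lclTreeOk S E i C}

/-!
The sets `A i = {τ | lclCompat S E i τ}` of labels that can sit on top of a valid copy of `T_i`
form a decreasing chain of subsets of the finite label set, so it has to stop strictly decreasing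
within `|Σ|` steps. Since `A (i + 1)` is determined by `A i`, once `A m = A (m + 1)` the chain is
constant from `m` on. Hence a labeling of `T_{|Σ|+1}*` yields labelings of every `T_i*`, and
`γ = |Σ| + 1` works for every `𝒮` simultaneously.
-/

theorem Finset.exists_le_card_eq_succ_of_antitone {α : Type*} [Fintype α] {f : ℕ → Finset α}
    (hf : Antitone f) : ∃ m ≤ Fintype.card α, f m = f (m + 1) := by
  by_contra! hne
  have hdecr : ∀ k ≤ Fintype.card α + 1, (f k).card + k ≤ (f 0).card := by
    intro k
    induction k with
    | zero => simp
    | succ k ih =>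
      intro hk
      have hlt : (f (k + 1)).card < (f k).card :=
        Finset.card_lt_card ((hf k.le_succ).ssubset_of_ne (hne k (by omega)).symm)
      have := ih (by omega)
      omega
  have := hdecr _ le_rfl
  have := (f 0).card_le_univ
  omega

section lclCompat

variable {L : Type} [DecidableEq L] (S E : Set (Multiset L))

theorem lclCompat_of_succ : ∀ {i : ℕ} {τ : L}, lclCompat S E (i + 1) τ → lclCompat S E i τ
  | 0, _, _ => trivial
  | _ + 1, _, ⟨C, hC, hτ, hβ⟩ => ⟨C, hC, hτ, fun β hβC =>
      let ⟨τ', hE, hτ'⟩ := hβ β hβC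
      ⟨τ', hE, lclCompat_of_succ hτ'⟩⟩

theorem lclCompat_antitone : Antitone fun i => {τ : L | lclCompat S E i τ} :=
  antitone_nat_of_succ_le fun _ _ => lclCompat_of_succ S E

theorem lclCompat_succ_congr {i j : ℕ} (h : ∀ τ : L, lclCompat S E i τ ↔ lclCompat S E j τ)
    (τ : L) : lclCompat S E (i + 1) τ ↔ lclCompat S E (j + 1) τ := by
  simp only [lclCompat, h]

theorem lclCompat_add_iff_of_succ_iff {m : ℕ}
    (hm : ∀ τ : L, lclCompat S E (m + 1) τ ↔ lclCompat S E m τ) :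
    ∀ (k : ℕ) (τ : L), lclCompat S E (m + k) τ ↔ lclCompat S E m τ
  | 0, _ => Iff.rfl
  | k + 1, τ => (lclCompat_succ_congr S E (lclCompat_add_iff_of_succ_iff hm k) τ).trans (hm τ)

theorem lclCompat_of_lclCompat_card [Fintype L] {τ : L}
    (hτ : lclCompat S E (Fintype.card L) τ) (j : ℕ) : lclCompat S E j τ := by
  classical
  obtain ⟨m, hmN, hm⟩ := Finset.exists_le_card_eq_succ_of_antitone
    (f := fun i => Finset.univ.filter (lclCompat S E i)) fun _ _ hij _ => by
      simp only [Finset.mem_filter, Finset.mem_univ, true_and]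
      exact fun h => lclCompat_antitone S E hij h
  have hm' : ∀ τ : L, lclCompat S E (m + 1) τ ↔ lclCompat S E m τ := fun τ => by
    simpa using (Finset.ext_iff.mp hm τ).symm
  rcases le_or_gt j (Fintype.card L) with hj | hj
  · exact lclCompat_antitone S E hj hτ
  · obtain ⟨k, rfl⟩ := Nat.exists_eq_add_of_le (hmN.trans hj.le)
    exact (lclCompat_add_iff_of_succ_iff S E hm' k τ).mpr (lclCompat_antitone S E hmN hτ)

theorem lclTreeOk_of_lclTreeOk_card_succ [Fintype L] {C : Multiset L}
    (hC : lclTreeOk S E (Fintype.card L + 1) C) (i : ℕ) : lclTreeOk S E i C := fun β hβ =>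
  let ⟨τ, hE, hτ⟩ := hC β hβ
  ⟨τ, hE, lclCompat_of_lclCompat_card S E hτ (i - 1)⟩

end lclCompat

theorem stmt2_general {L : Type} [Fintype L] [DecidableEq L]
    (V E : Set (Multiset L)) :
    ∃ γ : ℕ, 1 ≤ γ ∧ ∀ S : Set (Multiset L), S ⊆ V →
      ∀ C ∈ S, C ∉ lclTrim S E → ¬ lclTreeOk S E γ C :=
  ⟨Fintype.card L + 1, Nat.le_add_left 1 _, fun S _ _ hCS hCtrim hOk =>
    hCtrim ⟨hCS, fun i _ => lclTreeOk_of_lclTreeOk_card_succ S E hOk i⟩⟩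

/-- A uniform witness height `γ` for non-membership in `trim`. -/
theorem stmt2 {L : Type} [Fintype L] [DecidableEq L]
    (Δ : ℕ) (hΔ : 1 ≤ Δ) (V E : Set (Multiset L))
    (hV : ∀ C ∈ V, Multiset.card C = Δ)
    (hE : ∀ D ∈ E, Multiset.card D = 2) :
    ∃ γ : ℕ, 1 ≤ γ ∧ ∀ S : Set (Multiset L), S ⊆ V →
      ∀ C ∈ S, C ∉ lclTrim S E → ¬ lclTreeOk S E γ C :=
  stmt2_general V E
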